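/- For x, y ∈ Z[ω], the quantity Re(√2·x·y*) belongs to Z[ω] and satisfies gde(Re(√2·x·y*), √2) ≥ ⌊(gde(|x|², √2) + gde(|y|², √2))/2⌋. -/

import Mathlib

noncomputable section

open Complex

/-- The eighth root of unity ω = e^{iπ/4}. -/
def omg : ℂ := Complex.exp (Real.pi * Complex.I / 4)

/-- √2 as a complex number. -/
def rt2 : ℂ := (Real.sqrt 2 : ℝ)

/-- Membership in the ring Z[ω] = {a + bω + cω² + dω³ : a,b,c,d ∈ ℤ}. -/
def Zomega (z : ℂ) : Prop :=
  ∃ a b c d : ℤ, z = a + b * omg + c * omg ^ 2 + d * omg ^ 3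

/-- Membership in the ring Z[1/√2, i] = {u/(√2)^n : u ∈ Z[ω], n ∈ ℕ}. -/
def ZRoot2i (z : ℂ) : Prop :=
  ∃ u : ℂ, Zomega u ∧ ∃ n : ℕ, z = u / rt2 ^ n

/-- `b` divides `z` within the ring Z[ω]. -/
def ZDvd (b z : ℂ) : Prop := ∃ q : ℂ, Zomega q ∧ z = b * q

/-- `k` is the greatest dividing exponent of base `b` with respect to `z`:
`b^k` divides `z` in Z[ω], while `b^(k+1)` does not. -/
def IsGde (b z : ℂ) (k : ℕ) : Prop := ZDvd (b ^ k) z ∧ ¬ ZDvd (b ^ (k + 1)) z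

/-- `k` is the smallest denominator exponent of base √2 with respect to `z`:
the smallest integer `k` such that `z·(√2)^k ∈ Z[ω]`. -/
def IsSde (z : ℂ) (k : ℤ) : Prop :=
  Zomega (z * rt2 ^ k) ∧ ∀ j : ℤ, Zomega (z * rt2 ^ j) → k ≤ j

/-! The prime of `ℤ[ω]` above `2` is `λ = 1 - ω` (`lam`): `√2` is `λ²` times a unit, `conj λ` is an
associate of `λ`, and `λ` divides `a + bω + cω² + dω³` exactly when `a + b + c + d` is even, so
`ℤ[ω]/λ ≅ 𝔽₂` and `λ` is prime. Hence `√2 ^ k ∣ x * conj x` forces `λ ^ k ∣ x`, and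
`x * conj y = λ ^ (kx + ky) * q` with `q ∈ ℤ[ω]`. Each factor `λ²` contributes a real factor `√2`,
which comes out of the real part; what remains is some `Re (√2 * t)` with `t ∈ ℤ[ω]`, and that lies
in `ℤ[ω]` because `Re (√2 * (a + bω + cω² + dω³)) = (b - d) + a√2`. -/

lemma omg_eq : omg = rt2 / 2 * (1 + I) := by
  have h : omg = exp ((Real.pi / 4 : ℝ) * I) := by
    rw [omg]; push_cast; ring_nf
  apply Complex.ext
  · rw [h, exp_ofReal_mul_I_re, Real.cos_pi_div_four]
    simp [rt2]
  · rw [h, exp_ofReal_mul_I_im, Real.sin_pi_div_four]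
    simp [rt2]

lemma rt2_sq : rt2 ^ 2 = 2 := by
  rw [rt2, ← ofReal_pow, Real.sq_sqrt zero_le_two]
  norm_num

lemma rt2_ne_zero : rt2 ≠ 0 := by
  simp [rt2]

lemma conj_rt2 : starRingEnd ℂ rt2 = rt2 :=
  conj_ofReal _

lemma omg_sq : omg ^ 2 = I := by
  rw [omg_eq]
  linear_combination (1 + I) ^ 2 / 4 * rt2_sq + 1 / 2 * I_sq

lemma omg_pow_four : omg ^ 4 = -1 := by
  rw [show omg ^ 4 = (omg ^ 2) ^ 2 by ring, omg_sq, I_sq]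

lemma rt2_eq : rt2 = omg - omg ^ 3 := by
  rw [show omg ^ 3 = omg ^ 2 * omg by ring, omg_sq, omg_eq]
  linear_combination rt2 / 2 * I_sq

lemma conj_omg : starRingEnd ℂ omg = -omg ^ 3 := by
  rw [show omg ^ 3 = omg ^ 2 * omg by ring, omg_sq, omg_eq]
  simp only [map_mul, map_div₀, map_add, map_one, conj_I, conj_rt2, map_ofNat]
  linear_combination rt2 / 2 * I_sq

lemma coords_mul (a b c d a' b' c' d' : ℤ) :
    ((a : ℂ) + b * omg + c * omg ^ 2 + d * omg ^ 3) * (a' + b' * omg + c' * omg ^ 2 + d' * omg ^ 3)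
      = ((a * a' - b * d' - c * c' - d * b' : ℤ) : ℂ)
        + (a * b' + b * a' - c * d' - d * c' : ℤ) * omg
        + (a * c' + b * b' + c * a' - d * d' : ℤ) * omg ^ 2
        + (a * d' + b * c' + c * b' + d * a' : ℤ) * omg ^ 3 := by
  push_cast
  linear_combination (b * d' + c * c' + d * b' + (c * d' + d * c') * omg + d * d' * omg ^ 2 : ℂ)
    * omg_pow_four

lemma conj_coords (a b c d : ℤ) :
    starRingEnd ℂ ((a : ℂ) + b * omg + c * omg ^ 2 + d * omg ^ 3)
      = (a : ℂ) + (-d : ℤ) * omg + (-c : ℤ) * omg ^ 2 + (-b : ℤ) * omg ^ 3 := by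
  simp only [map_add, map_mul, map_pow, map_intCast, conj_omg]
  push_cast
  linear_combination (c * omg ^ 2 - d * omg * (omg ^ 4 - 1) : ℂ) * omg_pow_four

lemma eq_zero_of_intCast_add_intCast_mul_sqrt_two {p q : ℤ} (h : p + q * √2 = (0 : ℝ)) :
    p = 0 ∧ q = 0 := by
  obtain rfl | hq := eq_or_ne q 0
  · exact ⟨by simpa using h, rfl⟩
  · exact absurd h ((irrational_sqrt_two.intCast_mul hq).intCast_add p).ne_zero

lemma coords_eq_zero {a b c d : ℤ} (h : (a : ℂ) + b * omg + c * omg ^ 2 + d * omg ^ 3 = 0) :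
    a = 0 ∧ b = 0 ∧ c = 0 ∧ d = 0 := by
  have h' : (⟨2 * a + (b - d) * √2, 2 * c + (b + d) * √2⟩ : ℂ) = 0 := by
    rw [mk_eq_add_mul_I, ← mul_eq_zero_of_right 2 h, show omg ^ 3 = omg ^ 2 * omg by ring, omg_sq,
      omg_eq, rt2]
    push_cast
    linear_combination -(d : ℂ) * (√2 : ℝ) * I_sq
  obtain ⟨hre, him⟩ := Complex.ext_iff.1 h'
  have := eq_zero_of_intCast_add_intCast_mul_sqrt_two (p := 2 * a) (q := b - d)
    (by push_cast; exact hre)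
  have := eq_zero_of_intCast_add_intCast_mul_sqrt_two (p := 2 * c) (q := b + d)
    (by push_cast; exact him)
  omega

lemma coords_injective {a b c d a' b' c' d' : ℤ}
    (h : (a : ℂ) + b * omg + c * omg ^ 2 + d * omg ^ 3
      = a' + b' * omg + c' * omg ^ 2 + d' * omg ^ 3) :
    a = a' ∧ b = b' ∧ c = c' ∧ d = d' := by
  have := coords_eq_zero (a := a - a') (b := b - b') (c := c - c') (d := d - d')
    (by push_cast; linear_combination h)
  omega

lemma zomega_omg_add_omg_sq : Zomega (omg + omg ^ 2) := ⟨0, 1, 1, 0, by push_cast; ring⟩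

lemma zomega_rt2 : Zomega rt2 := ⟨0, 1, 0, -1, by rw [rt2_eq]; push_cast; ring⟩

lemma zomega_rt2_add_one : Zomega (rt2 + 1) := ⟨1, 1, 0, -1, by rw [rt2_eq]; push_cast; ring⟩

namespace Zomega

lemma mul {u v : ℂ} (hu : Zomega u) (hv : Zomega v) : Zomega (u * v) := by
  obtain ⟨a, b, c, d, rfl⟩ := hu
  obtain ⟨a', b', c', d', rfl⟩ := hv
  exact ⟨_, _, _, _, coords_mul a b c d a' b' c' d'⟩

lemma conj {u : ℂ} (hu : Zomega u) : Zomega (starRingEnd ℂ u) := by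
  obtain ⟨a, b, c, d, rfl⟩ := hu
  exact ⟨_, _, _, _, conj_coords a b c d⟩

lemma pow {u : ℂ} (hu : Zomega u) (n : ℕ) : Zomega (u ^ n) := by
  induction n with
  | zero => exact ⟨1, 0, 0, 0, by simp⟩
  | succ n ih => rw [pow_succ]; exact ih.mul hu

lemma re_rt2_mul {t : ℂ} (ht : Zomega t) : Zomega ((rt2 * t).re : ℂ) := by
  obtain ⟨a, b, c, d, rfl⟩ := ht
  refine ⟨b - d, a, 0, -a, ?_⟩
  rw [re_eq_add_conj, map_mul, conj_rt2, conj_coords, rt2_eq]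
  push_cast
  linear_combination ((b - d) * (omg ^ 2 - 2) / 2 : ℂ) * omg_pow_four

end Zomega

namespace ZDvd

lemma zomega {b z : ℂ} (hb : Zomega b) (h : ZDvd b z) : Zomega z := by
  obtain ⟨q, hq, rfl⟩ := h
  exact hb.mul hq

lemma mul_mul {a b c d : ℂ} (hab : ZDvd a b) (hcd : ZDvd c d) : ZDvd (a * c) (b * d) := by
  obtain ⟨q, hq, rfl⟩ := hab
  obtain ⟨r, hr, rfl⟩ := hcd
  exact ⟨q * r, hq.mul hr, by ring⟩

lemma conj {b z : ℂ} (h : ZDvd b z) (hb : ZDvd b (starRingEnd ℂ b)) :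
    ZDvd b (starRingEnd ℂ z) := by
  obtain ⟨q, hq, rfl⟩ := h
  obtain ⟨r, hr, hbr⟩ := hb
  exact ⟨r * starRingEnd ℂ q, hr.mul hq.conj, by rw [map_mul, hbr, mul_assoc]⟩

end ZDvd

def lam : ℂ := 1 - omg

lemma zomega_lam : Zomega lam := ⟨1, -1, 0, 0, by rw [lam]; push_cast; ring⟩

lemma rt2_eq_lam_mul : rt2 = lam * (omg + omg ^ 2) := by
  rw [lam, rt2_eq]; ring

lemma lam_sq : lam ^ 2 = rt2 * (-1 + omg - omg ^ 2) := by
  rw [lam, rt2_eq]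
  linear_combination (1 - omg) * omg_pow_four

lemma lam_mul_conj_lam : lam * starRingEnd ℂ lam = rt2 * (rt2 - 1) := by
  rw [lam, map_sub, map_one, conj_omg, rt2_eq]
  linear_combination (1 - omg ^ 2) * omg_pow_four

lemma lam_pow_zdvd_conj (k : ℕ) : ZDvd (lam ^ k) (starRingEnd ℂ (lam ^ k)) := by
  refine ⟨(omg ^ 3) ^ k, Zomega.pow ⟨0, 0, 0, 1, by push_cast; ring⟩ k, ?_⟩
  rw [map_pow, ← mul_pow, lam, map_sub, map_one, conj_omg]
  congr 1
  linear_combination omg_pow_four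

lemma lam_zdvd_iff_even {a b c d : ℤ} :
    ZDvd lam ((a : ℂ) + b * omg + c * omg ^ 2 + d * omg ^ 3) ↔ Even (a + b + c + d) := by
  constructor
  · rintro ⟨_, ⟨p, q, r, s, rfl⟩, h⟩
    have h' : (a : ℂ) + b * omg + c * omg ^ 2 + d * omg ^ 3
        = ((p + s : ℤ) : ℂ) + (q - p : ℤ) * omg + (r - q : ℤ) * omg ^ 2
          + (s - r : ℤ) * omg ^ 3 := by
      rw [h, lam]
      push_cast
      linear_combination (-s : ℂ) * omg_pow_four
    obtain ⟨rfl, rfl, rfl, rfl⟩ := coords_injective h'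
    exact ⟨s, by ring⟩
  · rintro ⟨t, ht⟩
    refine ⟨(t - d - c - b : ℤ) + (t - d - c : ℤ) * omg + (t - d : ℤ) * omg ^ 2 + (t : ℤ) * omg ^ 3,
      ⟨_, _, _, _, rfl⟩, ?_⟩
    have ha : (a : ℂ) = t + t - b - c - d := by norm_cast; omega
    rw [lam, ha]
    push_cast
    linear_combination (t : ℂ) * omg_pow_four

lemma lam_zdvd_or_lam_zdvd_of_lam_zdvd_mul {u v : ℂ} (hu : Zomega u) (hv : Zomega v)
    (h : ZDvd lam (u * v)) : ZDvd lam u ∨ ZDvd lam v := by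
  obtain ⟨a, b, c, d, rfl⟩ := hu
  obtain ⟨a', b', c', d', rfl⟩ := hv
  rw [coords_mul, lam_zdvd_iff_even] at h
  simp only [lam_zdvd_iff_even, ← Int.even_mul]
  have hsum : (a + b + c + d) * (a' + b' + c' + d')
      = (a * a' - b * d' - c * c' - d * b') + (a * b' + b * a' - c * d' - d * c')
        + (a * c' + b * b' + c * a' - d * d') + (a * d' + b * c' + c * b' + d * a')
        + 2 * (b * d' + c * c' + d * b' + c * d' + d * c' + d * d') := by ring
  rw [hsum]
  exact h.add (even_two_mul _)

lemma lam_zdvd_of_lam_zdvd_mul_conj {x : ℂ} (hx : Zomega x) (h : ZDvd lam (x * starRingEnd ℂ x)) :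
    ZDvd lam x := by
  have hlam : ZDvd lam (starRingEnd ℂ lam) := by simpa using lam_pow_zdvd_conj 1
  rcases lam_zdvd_or_lam_zdvd_of_lam_zdvd_mul hx hx.conj h with h | h
  · exact h
  · simpa using h.conj hlam

lemma lam_pow_zdvd_of_rt2_pow_zdvd_mul_conj {x : ℂ} (hx : Zomega x) {k : ℕ}
    (h : ZDvd (rt2 ^ k) (x * starRingEnd ℂ x)) : ZDvd (lam ^ k) x := by
  induction k generalizing x with
  | zero => exact ⟨x, hx, (one_mul x).symm⟩
  | succ k ih =>
    obtain ⟨q, hq, hxq⟩ := h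
    obtain ⟨x', hx', rfl⟩ : ZDvd lam x := lam_zdvd_of_lam_zdvd_mul_conj hx
      ⟨(omg + omg ^ 2) * rt2 ^ k * q, (zomega_omg_add_omg_sq.mul (zomega_rt2.pow k)).mul hq,
        by rw [hxq, pow_succ', rt2_eq_lam_mul]; ring⟩
    have hx'q : x' * starRingEnd ℂ x' = rt2 ^ k * ((rt2 + 1) * q) := by
      -- `λ * conj λ = √2 * (√2 - 1)`, and `√2 - 1` is a unit with inverse `√2 + 1`
      apply mul_left_cancel₀ rt2_ne_zero
      rw [map_mul] at hxq
      linear_combination (rt2 + 1) * hxq - (rt2 + 1) * (x' * starRingEnd ℂ x') * lam_mul_conj_lam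
        - rt2 * (x' * starRingEnd ℂ x') * rt2_sq
    obtain ⟨r, hr, rfl⟩ := ih hx' ⟨(rt2 + 1) * q, zomega_rt2_add_one.mul hq, hx'q⟩
    exact ⟨r, hr, by ring⟩

lemma re_rt2_mul (z : ℂ) : ((rt2 * z).re : ℂ) = rt2 * (z.re : ℂ) := by
  simp [rt2]

lemma rt2_pow_zdvd_re_rt2_mul :
    ∀ {n : ℕ} {t : ℂ}, ZDvd (lam ^ n) t → ZDvd (rt2 ^ (n / 2)) ((rt2 * t).re : ℂ)
  | 0, _, h | 1, _, h => ⟨_, (h.zomega (zomega_lam.pow _)).re_rt2_mul, by simp⟩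
  | n + 2, t, ⟨q, hq, ht⟩ => by
    have ht' : t = rt2 * ((-1 + omg - omg ^ 2) * lam ^ n * q) := by
      rw [ht, pow_add, lam_sq]; ring
    obtain ⟨r, hr, hre⟩ :=
      rt2_pow_zdvd_re_rt2_mul (n := n) (t := (-1 + omg - omg ^ 2) * lam ^ n * q)
      ⟨(-1 + omg - omg ^ 2) * q, Zomega.mul ⟨-1, 1, -1, 0, by push_cast; ring⟩ hq, by ring⟩
    refine ⟨r, hr, ?_⟩
    rw [ht', re_rt2_mul, hre, show (n + 2) / 2 = n / 2 + 1 by omega, pow_succ']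
    ring

theorem stmt7_general (x y : ℂ) (hx : Zomega x) (hy : Zomega y)
    (kx ky : ℕ)
    (hkx : IsGde rt2 (x * (starRingEnd ℂ) x) kx)
    (hky : IsGde rt2 (y * (starRingEnd ℂ) y) ky) :
    Zomega (((rt2 * x * (starRingEnd ℂ) y).re : ℝ) : ℂ) ∧
      ZDvd (rt2 ^ ((kx + ky) / 2)) (((rt2 * x * (starRingEnd ℂ) y).re : ℝ) : ℂ) := by
  have hxy : ZDvd (lam ^ (kx + ky)) (x * starRingEnd ℂ y) := by
    rw [pow_add]
    exact (lam_pow_zdvd_of_rt2_pow_zdvd_mul_conj hx hkx.1).mul_mul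
      ((lam_pow_zdvd_of_rt2_pow_zdvd_mul_conj hy hky.1).conj (lam_pow_zdvd_conj ky))
  rw [mul_assoc]
  exact ⟨(hx.mul hy.conj).re_rt2_mul, rt2_pow_zdvd_re_rt2_mul hxy⟩

/-- Re(√2·x·y*) belongs to Z[ω] and
gde(Re(√2·x·y*), √2) ≥ ⌊(gde(|x|², √2) + gde(|y|², √2))/2⌋. -/
theorem stmt7 (x y : ℂ) (hx : Zomega x) (hy : Zomega y)
    (hx0 : x ≠ 0) (hy0 : y ≠ 0) (kx ky : ℕ)
    (hkx : IsGde rt2 (x * (starRingEnd ℂ) x) kx)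
    (hky : IsGde rt2 (y * (starRingEnd ℂ) y) ky) :
    Zomega (((rt2 * x * (starRingEnd ℂ) y).re : ℝ) : ℂ) ∧
      ZDvd (rt2 ^ ((kx + ky) / 2)) (((rt2 * x * (starRingEnd ℂ) y).re : ℝ) : ℂ) :=
  stmt7_general x y hx hy kx ky hkx hky
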